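/- Let n be a positive integer, B a symmetric n×n real matrix, g ∈ ℝⁿ, and δ > 0. If p* ∈ ℝⁿ is a global minimizer of q(p) = gᵀp + (1/2)pᵀBp over the set {p ∈ ℝⁿ : ‖p‖₂ ≤ δ}, then ‖p*‖₂ ≤ δ and there exists σ* ≥ 0 such that B + σ*I is positive semidefinite, (B + σ*I)p* = -g, and σ*(δ - ‖p*‖₂) = 0 (necessity direction of the Moré–Sorensen optimality conditions). -/

import Mathlib

/-!
Let `r = g + B p⋆` be the gradient of `q` at `p⋆`. Minimality along segments in the ball gives the
variational inequality `⟪r, x - p⋆⟫ ≥ 0` for every feasible `x`; testing it at `x = -δ r / ‖r‖`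
and comparing with Cauchy–Schwarz forces `r = -σ p⋆` with `σ = ‖r‖ / δ ≥ 0` and
`σ (δ - ‖p⋆‖) = 0`. Then `q (p⋆ + w) - q p⋆ = ½ wᵀ(B + σI)w - σ/2 (‖p⋆ + w‖² - ‖p⋆‖²)`, so the
quadratic form of `B + σI` is nonnegative on a small ball (interior case, `σ = 0`) or on every
chord `w` of the sphere of radius `‖p⋆‖` (boundary case). Both imply positive semidefiniteness,
the second by rescaling chords and a limit in the directions tangent to the sphere.
-/

open Set Matrix
open scoped RealInnerProductSpace

lemma nonneg_of_forall_Ioc_quadratic_nonneg {a b c : ℝ}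
    (h : ∀ t ∈ Ioc (0 : ℝ) 1, 0 ≤ a + b * t + c * t ^ 2) : 0 ≤ a := by
  have hcont : Continuous fun t : ℝ => a + b * t + c * t ^ 2 := by fun_prop
  have hlim := (hcont.tendsto 0).mono_left (nhdsWithin_le_nhds (s := Ioi 0))
  refine ge_of_tendsto (by simpa using hlim) ?_
  filter_upwards [Ioc_mem_nhdsGT one_pos] using h

section QuadraticModel

variable {E : Type*} [NormedAddCommGroup E] [InnerProductSpace ℝ E]

noncomputable def quadraticModel (T : E →ₗ[ℝ] E) (g p : E) : ℝ := ⟪g, p⟫ + 1 / 2 * ⟪T p, p⟫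

variable {T : E →ₗ[ℝ] E} {g : E}

lemma quadraticModel_add (hT : T.IsSymmetric) (p w : E) :
    quadraticModel T g (p + w) =
      quadraticModel T g p + ⟪g + T p, w⟫ + 1 / 2 * ⟪T w, w⟫ := by
  simp only [quadraticModel, map_add, inner_add_left, inner_add_right, hT w p,
    real_inner_comm (T p) w]
  ring

lemma quadraticModel_add_of_eq_neg_smul (hT : T.IsSymmetric) {σ : ℝ} {p : E}
    (hp : g + T p = -(σ • p)) (w : E) :
    quadraticModel T g (p + w) = quadraticModel T g p + 1 / 2 * ⟪(T + σ • 1) w, w⟫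
      - σ / 2 * (‖p + w‖ ^ 2 - ‖p‖ ^ 2) := by
  simp only [quadraticModel_add hT, hp, LinearMap.add_apply, LinearMap.smul_apply,
    Module.End.one_apply, inner_add_left, inner_neg_left, real_inner_smul_left,
    real_inner_self_eq_norm_sq, norm_add_sq_real]
  ring

lemma inner_gradient_sub_nonneg_of_isMinOn (hT : T.IsSymmetric) {s : Set E} (hs : Convex ℝ s)
    {p x : E} (hmin : IsMinOn (quadraticModel T g) s p) (hp : p ∈ s) (hx : x ∈ s) :
    0 ≤ ⟪g + T p, x - p⟫ := by
  refine nonneg_of_forall_Ioc_quadratic_nonneg (b := 1 / 2 * ⟪T (x - p), x - p⟫) (c := 0)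
    fun t ht => nonneg_of_mul_nonneg_right ?_ ht.1
  have hle : quadraticModel T g p ≤ quadraticModel T g (p + t • (x - p)) :=
    hmin (hs.add_smul_sub_mem hp hx (Ioc_subset_Icc_self ht))
  simp only [quadraticModel_add hT, map_smul, real_inner_smul_left, real_inner_smul_right] at hle
  nlinarith

lemma exists_eq_neg_smul_of_forall_inner_sub_nonneg {r p : E} {δ : ℝ} (hδ : 0 < δ)
    (hp : ‖p‖ ≤ δ) (h : ∀ x, ‖x‖ ≤ δ → 0 ≤ ⟪r, x - p⟫) :
    ∃ σ, 0 ≤ σ ∧ r = -(σ • p) ∧ σ * (δ - ‖p‖) = 0 := by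
  rcases eq_or_ne r 0 with rfl | hr
  · exact ⟨0, le_rfl, by simp, by simp⟩
  have hr' : 0 < ‖r‖ := norm_pos_iff.2 hr
  have hmin : ⟪r, p⟫ ≤ -(δ * ‖r‖) := by
    have hx := h (-(δ / ‖r‖) • r) (by
      rw [norm_smul, norm_neg, Real.norm_of_nonneg (by positivity), div_mul_cancel₀ _ hr'.ne'])
    rw [inner_sub_right, real_inner_smul_right, real_inner_self_eq_norm_sq] at hx
    have hδr : δ / ‖r‖ * ‖r‖ ^ 2 = δ * ‖r‖ := by field_simp
    linarith
  have hcs := real_inner_le_norm (-r) p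
  rw [inner_neg_left, norm_neg] at hcs
  have hpδ : ‖p‖ = δ := le_antisymm hp (le_of_mul_le_mul_left (by linarith) hr')
  have hpar : ‖p‖ • -r = ‖-r‖ • p := by
    refine inner_eq_norm_mul_iff_real.1 ?_
    rw [inner_neg_left, norm_neg]
    rw [hpδ] at hcs ⊢
    linarith
  refine ⟨‖r‖ / δ, by positivity, ?_, by rw [hpδ, sub_self, mul_zero]⟩
  rw [norm_neg, hpδ, smul_neg] at hpar
  rw [div_eq_inv_mul, mul_smul, ← hpar, smul_neg, inv_smul_smul₀ hδ.ne', neg_neg]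

lemma inner_apply_self_nonneg_of_norm_le {S : E →ₗ[ℝ] E} {ε : ℝ} (hε : 0 < ε)
    (h : ∀ w, ‖w‖ ≤ ε → 0 ≤ ⟪S w, w⟫) (w : E) : 0 ≤ ⟪S w, w⟫ := by
  rcases eq_or_ne w 0 with rfl | hw
  · simp
  have hc : 0 < ε / ‖w‖ := div_pos hε (norm_pos_iff.2 hw)
  have hscaled := h ((ε / ‖w‖) • w) (by
    rw [norm_smul, Real.norm_of_nonneg hc.le, div_mul_cancel₀ _ (norm_ne_zero_iff.2 hw)])
  rw [map_smul, real_inner_smul_left, real_inner_smul_right, ← mul_assoc] at hscaled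
  exact nonneg_of_mul_nonneg_right hscaled (mul_pos hc hc)

lemma inner_apply_self_nonneg_of_norm_add_eq {S : E →ₗ[ℝ] E} {p : E} (hp : p ≠ 0)
    (h : ∀ w, ‖p + w‖ = ‖p‖ → 0 ≤ ⟪S w, w⟫) (w : E) : 0 ≤ ⟪S w, w⟫ := by
  have transversal : ∀ u, ⟪p, u⟫ ≠ 0 → 0 ≤ ⟪S u, u⟫ := by
    intro u hu
    have hu2 : ‖u‖ ^ 2 ≠ 0 := pow_ne_zero 2 (norm_ne_zero_iff.2 (by rintro rfl; simp at hu))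
    -- `p + t • u` is the second intersection of the line `p + ℝ u` with the sphere
    set t := -(2 * ⟪p, u⟫) / ‖u‖ ^ 2
    have ht : t ≠ 0 := div_ne_zero (by simpa using hu) hu2
    have htu : t * ‖u‖ ^ 2 = -(2 * ⟪p, u⟫) := div_mul_cancel₀ _ hu2
    have hchord := h (t • u) (by
      rw [← sq_eq_sq₀ (norm_nonneg _) (norm_nonneg _), norm_add_sq_real, real_inner_smul_right,
        norm_smul, mul_pow, Real.norm_eq_abs, sq_abs]
      linear_combination t * htu)
    rw [map_smul, real_inner_smul_left, real_inner_smul_right, ← mul_assoc] at hchord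
    exact nonneg_of_mul_nonneg_right hchord (mul_self_pos.2 ht)
  by_cases hw : ⟪p, w⟫ = 0
  · refine nonneg_of_forall_Ioc_quadratic_nonneg (b := ⟪S w, p⟫ + ⟪S p, w⟫) (c := ⟪S p, p⟫)
      fun t ht => ?_
    have hperturbed := transversal (w + t • p) (by
      rw [inner_add_right, hw, real_inner_smul_right, zero_add]
      exact mul_ne_zero ht.1.ne' (inner_self_ne_zero.2 hp))
    simp only [map_add, map_smul, inner_add_left, inner_add_right, real_inner_smul_left,
      real_inner_smul_right] at hperturbed
    linarith
  · exact transversal w hw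

theorem exists_moreSorensen_multiplier (hT : T.IsSymmetric) {δ : ℝ} (hδ : 0 < δ) {p : E}
    (hp : ‖p‖ ≤ δ) (hmin : IsMinOn (quadraticModel T g) (Metric.closedBall 0 δ) p) :
    ∃ σ, 0 ≤ σ ∧ (T + σ • 1).IsPositive ∧ T p + σ • p = -g ∧ σ * (δ - ‖p‖) = 0 := by
  obtain ⟨σ, hσ, hgrad, hcompl⟩ := exists_eq_neg_smul_of_forall_inner_sub_nonneg hδ hp
    fun x hx => inner_gradient_sub_nonneg_of_isMinOn hT (convex_closedBall 0 δ) hmin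
      (mem_closedBall_zero_iff.2 hp) (mem_closedBall_zero_iff.2 hx)
  have hS : ∀ w, ‖p + w‖ ≤ δ → σ * (‖p + w‖ ^ 2 - ‖p‖ ^ 2) = 0 →
      0 ≤ ⟪(T + σ • 1) w, w⟫ := by
    intro w hw hσw
    have hle : quadraticModel T g p ≤ quadraticModel T g (p + w) :=
      hmin (mem_closedBall_zero_iff.2 hw)
    rw [quadraticModel_add_of_eq_neg_smul hT hgrad] at hle
    linarith
  refine ⟨σ, hσ, (LinearMap.isPositive_iff _).2 ⟨hT.add (LinearMap.IsSymmetric.id.smul rfl), ?_⟩,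
    by linear_combination (norm := module) hgrad, hcompl⟩
  rcases hp.lt_or_eq with hlt | heq
  · have hσ0 : σ = 0 := (mul_eq_zero.1 hcompl).resolve_right (sub_pos.2 hlt).ne'
    refine inner_apply_self_nonneg_of_norm_le (sub_pos.2 hlt) fun w hw => hS w ?_ (by simp [hσ0])
    linarith [norm_add_le p w]
  · refine inner_apply_self_nonneg_of_norm_add_eq (norm_pos_iff.1 (heq ▸ hδ)) fun w hw => ?_
    exact hS w (hw.trans_le hp) (by rw [hw, sub_self, mul_zero])

end QuadraticModel

lemma quadraticModel_toEuclideanLin {ι : Type*} [Fintype ι] [DecidableEq ι]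
    (B : Matrix ι ι ℝ) (g p : EuclideanSpace ℝ ι) :
    quadraticModel (toEuclideanLin B) g p = g ⬝ᵥ p + 1 / 2 * (p ⬝ᵥ B *ᵥ p) := by
  simp [quadraticModel, EuclideanSpace.inner_eq_star_dotProduct, dotProduct_comm]

theorem mss_stmt1 (n : ℕ)
    (B : Matrix (Fin n) (Fin n) ℝ) (hB : B.IsSymm)
    (g : EuclideanSpace ℝ (Fin n)) (δ : ℝ) (hδ : 0 < δ)
    (pstar : EuclideanSpace ℝ (Fin n))
    (hfeas : ‖pstar‖ ≤ δ)
    (hmin : ∀ p : EuclideanSpace ℝ (Fin n), ‖p‖ ≤ δ →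
      g ⬝ᵥ pstar + (1 / 2) * (pstar ⬝ᵥ B.mulVec pstar) ≤
        g ⬝ᵥ p + (1 / 2) * (p ⬝ᵥ B.mulVec p)) :
    ‖pstar‖ ≤ δ ∧ ∃ σ : ℝ, 0 ≤ σ ∧ (B + σ • 1).PosSemidef ∧
      (B + σ • 1).mulVec pstar = -g ∧ σ * (δ - ‖pstar‖) = 0 := by
  have hT : (toEuclideanLin B).IsSymmetric :=
    isSymmetric_toEuclideanLin_iff.2 (isHermitian_iff_isSymm.2 hB)
  have hmin' : IsMinOn (quadraticModel (toEuclideanLin B) g) (Metric.closedBall 0 δ) pstar :=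
    fun p hp => by
      simpa [quadraticModel_toEuclideanLin] using hmin p (mem_closedBall_zero_iff.1 hp)
  obtain ⟨σ, hσ, hpos, hgrad, hcompl⟩ := exists_moreSorensen_multiplier hT hδ hfeas hmin'
  refine ⟨hfeas, σ, hσ, ?_, ?_, hcompl⟩
  · rw [← isPositive_toEuclideanLin_iff, map_add, map_smul, toLpLin_one]
    exact hpos
  · simpa [add_mulVec, smul_mulVec] using congrArg WithLp.ofLp hgrad
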